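/- arXiv:1304.0174 — 2 statements merged into one kernel-verified Lean document; each statement's English description precedes it below -/
import Mathlib

section
/- Let p ∈ V and t ∈ Λ²V both be nonzero. Then p ∧ t = 0 in Λ³V if and only if there exist q, r ∈ V with t = q ∧ r and p ∈ span{q, r}. (Equivalently: p ∧ t = 0 forces t to be decomposable, with the point K·p on the line K·q + K·r represented by t.) -/
/-!
Choose a functional `d` with `d p = 1`. Contraction with `d` is an antiderivation of the
exterior algebra, so contracting `p ∧ t = 0` gives `t = p ∧ (d ⌋ t)`, and `d ⌋ t` is a vector
because `t` has degree two. Conversely, `p ∧ q ∧ r` vanishes when `p, q, r` are linearly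
dependent, since it is alternating in its arguments.
-/

open TensorProduct

variable (K V : Type*) [Field K] [AddCommGroup V] [Module K V]

/-- The wedge `q ∧ r` of two vectors, as an element of the second exterior power. -/
def wedge2 (q r : V) : ⋀[K]^2 V :=
  ⟨ExteriorAlgebra.ιMulti K 2 ![q, r],
    ExteriorAlgebra.ιMulti_range K 2 (Set.mem_range_self _)⟩

/-- The wedge `p ∧ q ∧ r` of three vectors, as an element of the third exterior power. -/
def wedge3 (p q r : V) : ⋀[K]^3 V :=
  ⟨ExteriorAlgebra.ιMulti K 3 ![p, q, r],
    ExteriorAlgebra.ιMulti_range K 3 (Set.mem_range_self _)⟩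

namespace ExteriorAlgebra

variable {R M : Type*} [CommRing R] [AddCommGroup M] [Module R M]

theorem ιMulti_two (x y : M) : ιMulti R 2 ![x, y] = ι R x * ι R y := by
  simp [ιMulti_apply]

theorem contractLeft_mem_range_ι (d : Module.Dual R M) {x : ExteriorAlgebra R M}
    (hx : x ∈ ⋀[R]^2 M) : CliffordAlgebra.contractLeft d x ∈ LinearMap.range (ι R) := by
  rw [← ιMulti_span_fixedDegree] at hx
  induction hx using Submodule.span_induction with
  | mem z hz =>
    obtain ⟨v, rfl⟩ := hz
    rw [show v = ![v 0, v 1] from by ext i; fin_cases i <;> rfl, ιMulti_two]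
    refine ⟨d (v 0) • v 1 - d (v 1) • v 0, ?_⟩
    rw [CliffordAlgebra.contractLeft_ι_mul, CliffordAlgebra.contractLeft_ι, ← Algebra.commutes,
      ← Algebra.smul_def, map_sub, map_smul, map_smul]
  | zero => simp
  | add x y _ _ hx hy => simpa only [map_add] using add_mem hx hy
  | smul c x _ hx => simpa only [map_smul] using Submodule.smul_mem _ c hx

theorem exists_ι_mul_ι_eq_of_ι_mul_eq_zero {p : M} (d : Module.Dual R M) (hd : d p = 1)
    {x : ExteriorAlgebra R M} (hx : x ∈ ⋀[R]^2 M) (h : ι R p * x = 0) :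
    ∃ v : M, ι R p * ι R v = x := by
  obtain ⟨v, hv⟩ := contractLeft_mem_range_ι d hx
  have hcontract := CliffordAlgebra.contractLeft_ι_mul (Q := 0) (d := d) p x
  rw [h, map_zero, hd, one_smul, ← hv] at hcontract
  exact ⟨v, (sub_eq_zero.mp hcontract.symm).symm⟩

end ExteriorAlgebra

open ExteriorAlgebra

variable {K V}

theorem coe_wedge2 (q r : V) : (wedge2 K V q r : ExteriorAlgebra K V) = ι K q * ι K r :=
  ιMulti_two q r

theorem wedge3_eq_zero_of_mem_span {p q r : V} (h : p ∈ Submodule.span K {q, r}) :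
    wedge3 K V p q r = 0 :=
  Subtype.ext <| (ιMulti K 3).map_linearDependent _ fun hli =>
    (linearIndependent_finCons.mp hli).2 (by rwa [Matrix.range_cons_cons_empty])

theorem coe_apply_eq_ι_mul (w : V →ₗ[K] ↥(⋀[K]^2 V) →ₗ[K] ↥(⋀[K]^3 V))
    (hw : ∀ p q r : V, w p (wedge2 K V q r) = wedge3 K V p q r) (p : V) (t : ⋀[K]^2 V) :
    (w p t : ExteriorAlgebra K V) = ι K p * t := by
  suffices (⋀[K]^3 V).subtype ∘ₗ w p = LinearMap.mulLeft K (ι K p) ∘ₗ (⋀[K]^2 V).subtype from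
    LinearMap.congr_fun this t
  refine exteriorPower.linearMap_ext (AlternatingMap.ext fun m => ?_)
  rw [show m = ![m 0, m 1] from by ext i; fin_cases i <;> rfl]
  change ((w p (wedge2 K V (m 0) (m 1)) : ⋀[K]^3 V) : ExteriorAlgebra K V) =
    ι K p * ιMulti K 2 ![m 0, m 1]
  rw [hw]
  simp [wedge3]

theorem wedge_with_vector_eq_zero_iff_general
    (w : V →ₗ[K] ↥(⋀[K]^2 V) →ₗ[K] ↥(⋀[K]^3 V))
    (hw : ∀ p q r : V, w p (wedge2 K V q r) = wedge3 K V p q r)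
    (p : V) (t : ⋀[K]^2 V) (hp : p ≠ 0) :
    w p t = 0 ↔ ∃ q r : V, t = wedge2 K V q r ∧ p ∈ Submodule.span K {q, r} := by
  constructor
  · intro h
    have hpt : ι K p * (t : ExteriorAlgebra K V) = 0 := by
      rw [← coe_apply_eq_ι_mul w hw, h, ZeroMemClass.coe_zero]
    obtain ⟨d, hd⟩ := Module.Projective.exists_dual_eq_one K hp
    obtain ⟨v, hv⟩ := exists_ι_mul_ι_eq_of_ι_mul_eq_zero d hd t.2 hpt
    exact ⟨p, v, Subtype.ext (by rw [coe_wedge2, hv]), Submodule.subset_span (by simp)⟩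
  · rintro ⟨q, r, rfl, hpqr⟩
    rw [hw]
    exact wedge3_eq_zero_of_mem_span hpqr

/-- For nonzero `p ∈ V` and `t ∈ Λ²V` one has `p ∧ t = 0` if and only if `t` is
decomposable, `t = q ∧ r`, with `p` contained in the span of `q` and `r`. Here the wedge
`V × Λ²V → Λ³V` is given as a bilinear map `w` with `w p (q ∧ r) = p ∧ q ∧ r`. -/
theorem wedge_with_vector_eq_zero_iff
    (hV : Module.finrank K V = 4)
    (w : V →ₗ[K] ↥(⋀[K]^2 V) →ₗ[K] ↥(⋀[K]^3 V))
    (hw : ∀ p q r : V, w p (wedge2 K V q r) = wedge3 K V p q r)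
    (p : V) (t : ⋀[K]^2 V) (hp : p ≠ 0) (ht : t ≠ 0) :
    w p t = 0 ↔ ∃ q r : V, t = wedge2 K V q r ∧ p ∈ Submodule.span K {q, r} :=
  wedge_with_vector_eq_zero_iff_general w hw p t hp
end

section
/- If α : F → F is a Plücker transformation and M ⊆ F is a pencil (of type 0, 1 or 2), then the image α(M) is again a pencil (of type 0, 1 or 2). -/
/-- A flag of a 3-dimensional projective space: a triple `(P, g, ε)` of subspaces of the
underlying 4-dimensional vector space `V` with `finrank P = 1`, `finrank g = 2`,
`finrank ε = 3` and `P ≤ g ≤ ε`. -/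
structure ProjFlag (K : Type*) (V : Type*) [DivisionRing K] [AddCommGroup V]
    [Module K V] where
  pt : Submodule K V
  ln : Submodule K V
  pl : Submodule K V
  finrank_pt : Module.finrank K pt = 1
  finrank_ln : Module.finrank K ln = 2
  finrank_pl : Module.finrank K pl = 3
  pt_le_ln : pt ≤ ln
  ln_le_pl : ln ≤ pl

variable {K V : Type*} [DivisionRing K] [AddCommGroup V] [Module K V]

/-- Two flags are related if they agree in at least two of their three components. -/
def ProjFlag.Related (Φ Ψ : ProjFlag K V) : Prop :=
  (Φ.pt = Ψ.pt ∧ Φ.ln = Ψ.ln) ∨ (Φ.pt = Ψ.pt ∧ Φ.pl = Ψ.pl) ∨ (Φ.ln = Ψ.ln ∧ Φ.pl = Ψ.pl)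

/-- The set `F[g, ε]` of all flags with line component `g` and plane component `ε`. -/
def flagsOfLinePlane (g ε : Submodule K V) : Set (ProjFlag K V) :=
  {Φ : ProjFlag K V | Φ.ln = g ∧ Φ.pl = ε}

/-- The set `F[P, ε]` of all flags with point component `P` and plane component `ε`. -/
def flagsOfPointPlane (P ε : Submodule K V) : Set (ProjFlag K V) :=
  {Φ : ProjFlag K V | Φ.pt = P ∧ Φ.pl = ε}

/-- The set `F[P, g]` of all flags with point component `P` and line component `g`. -/
def flagsOfPointLine (P g : Submodule K V) : Set (ProjFlag K V) :=
  {Φ : ProjFlag K V | Φ.pt = P ∧ Φ.ln = g}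

/-- `M` is a pencil of type 0: `M = F[g, ε]` for a line `g` contained in a plane `ε`. -/
def IsPencil0 (M : Set (ProjFlag K V)) : Prop :=
  ∃ g ε : Submodule K V, Module.finrank K g = 2 ∧ Module.finrank K ε = 3 ∧ g ≤ ε ∧
    M = flagsOfLinePlane g ε

/-- `M` is a pencil of type 1: `M = F[P, ε]` for a point `P` contained in a plane `ε`. -/
def IsPencil1 (M : Set (ProjFlag K V)) : Prop :=
  ∃ P ε : Submodule K V, Module.finrank K P = 1 ∧ Module.finrank K ε = 3 ∧ P ≤ ε ∧
    M = flagsOfPointPlane P ε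

/-- `M` is a pencil of type 2: `M = F[P, g]` for a point `P` contained in a line `g`. -/
def IsPencil2 (M : Set (ProjFlag K V)) : Prop :=
  ∃ P g : Submodule K V, Module.finrank K P = 1 ∧ Module.finrank K g = 2 ∧ P ≤ g ∧
    M = flagsOfPointLine P g

/-- `M` is a pencil (of type 0, 1 or 2). -/
def IsPencil (M : Set (ProjFlag K V)) : Prop :=
  IsPencil0 M ∨ IsPencil1 M ∨ IsPencil2 M


lemma ProjFlag.ext' {Φ Ψ : ProjFlag K V} (h1 : Φ.pt = Ψ.pt) (h2 : Φ.ln = Ψ.ln)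
    (h3 : Φ.pl = Ψ.pl) : Φ = Ψ := by
  cases Φ; cases Ψ; cases h1; cases h2; cases h3; rfl

lemma myFinrank_sup_span_singleton [FiniteDimensional K V] (A : Submodule K V) {v : V}
    (hv : v ∉ A) : Module.finrank K ↥(A ⊔ (K ∙ v)) = Module.finrank K A + 1 := by
  have hv0 : v ≠ 0 := fun h => hv (h ▸ A.zero_mem)
  have hinf : A ⊓ (K ∙ v) = ⊥ := by
    rw [eq_bot_iff]
    intro x hx
    rw [Submodule.mem_inf] at hx
    obtain ⟨c, rfl⟩ := Submodule.mem_span_singleton.mp hx.2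
    rcases eq_or_ne c 0 with rfl | hc
    · simp
    · exact absurd (by simpa [smul_smul, inv_mul_cancel₀ hc] using A.smul_mem c⁻¹ hx.1) hv
  have h := Submodule.finrank_sup_add_finrank_inf_eq A (K ∙ v)
  rw [hinf, finrank_bot, finrank_span_singleton hv0] at h
  omega

lemma exists_pair_intermediate [FiniteDimensional K V] {A B : Submodule K V} (hAB : A ≤ B)
    (h : Module.finrank K A + 2 ≤ Module.finrank K B) :
    ∃ C₁ C₂ : Submodule K V, C₁ ≠ C₂ ∧ A ≤ C₁ ∧ C₁ ≤ B ∧ A ≤ C₂ ∧ C₂ ≤ B ∧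
      Module.finrank K C₁ = Module.finrank K A + 1 ∧
      Module.finrank K C₂ = Module.finrank K A + 1 := by
  have hlt : A < B := hAB.lt_of_ne (by rintro rfl; omega)
  obtain ⟨v, hvB, hvA⟩ := SetLike.exists_of_lt hlt
  have hr1 := myFinrank_sup_span_singleton A hvA
  have hC₁B : A ⊔ (K ∙ v) ≤ B := sup_le hAB ((Submodule.span_singleton_le_iff_mem _ _).mpr hvB)
  have hlt2 : A ⊔ (K ∙ v) < B := hC₁B.lt_of_ne (by intro h'; rw [h'] at hr1; omega)
  obtain ⟨w, hwB, hwC₁⟩ := SetLike.exists_of_lt hlt2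
  have hwA : w ∉ A := fun hw => hwC₁ (Submodule.mem_sup_left hw)
  refine ⟨A ⊔ (K ∙ v), A ⊔ (K ∙ w), ?_, le_sup_left, hC₁B, le_sup_left,
    sup_le hAB ((Submodule.span_singleton_le_iff_mem _ _).mpr hwB), hr1,
    myFinrank_sup_span_singleton A hwA⟩
  intro hEq
  exact hwC₁ (by rw [hEq]; exact Submodule.mem_sup_right (Submodule.mem_span_singleton_self w))

lemma relatedSet_eq_flagsOfLinePlane {Φ Ψ : ProjFlag K V} (hne : Φ ≠ Ψ)
    (hln : Φ.ln = Ψ.ln) (hpl : Φ.pl = Ψ.pl) :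
    {X : ProjFlag K V | X.Related Φ ∧ X.Related Ψ} = flagsOfLinePlane Φ.ln Φ.pl := by
  have hpt : Φ.pt ≠ Ψ.pt := fun h => hne (ProjFlag.ext' h hln hpl)
  ext X
  simp only [Set.mem_setOf_eq, flagsOfLinePlane, ProjFlag.Related]
  constructor
  · rintro ⟨(⟨h1, h2⟩ | ⟨h1, h2⟩ | ⟨h1, h2⟩), (⟨h3, h4⟩ | ⟨h3, h4⟩ | ⟨h3, h4⟩)⟩ <;>
      simp_all
  · rintro ⟨h1, h2⟩
    exact ⟨Or.inr (Or.inr ⟨h1, h2⟩), Or.inr (Or.inr ⟨h1.trans hln, h2.trans hpl⟩)⟩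

lemma relatedSet_eq_flagsOfPointPlane {Φ Ψ : ProjFlag K V} (hne : Φ ≠ Ψ)
    (hpt : Φ.pt = Ψ.pt) (hpl : Φ.pl = Ψ.pl) :
    {X : ProjFlag K V | X.Related Φ ∧ X.Related Ψ} = flagsOfPointPlane Φ.pt Φ.pl := by
  have hln : Φ.ln ≠ Ψ.ln := fun h => hne (ProjFlag.ext' hpt h hpl)
  ext X
  simp only [Set.mem_setOf_eq, flagsOfPointPlane, ProjFlag.Related]
  constructor
  · rintro ⟨(⟨h1, h2⟩ | ⟨h1, h2⟩ | ⟨h1, h2⟩), (⟨h3, h4⟩ | ⟨h3, h4⟩ | ⟨h3, h4⟩)⟩ <;>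
      simp_all
  · rintro ⟨h1, h2⟩
    exact ⟨Or.inr (Or.inl ⟨h1, h2⟩), Or.inr (Or.inl ⟨h1.trans hpt, h2.trans hpl⟩)⟩

lemma relatedSet_eq_flagsOfPointLine {Φ Ψ : ProjFlag K V} (hne : Φ ≠ Ψ)
    (hpt : Φ.pt = Ψ.pt) (hln : Φ.ln = Ψ.ln) :
    {X : ProjFlag K V | X.Related Φ ∧ X.Related Ψ} = flagsOfPointLine Φ.pt Φ.ln := by
  have hpl : Φ.pl ≠ Ψ.pl := fun h => hne (ProjFlag.ext' hpt hln h)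
  ext X
  simp only [Set.mem_setOf_eq, flagsOfPointLine, ProjFlag.Related]
  constructor
  · rintro ⟨(⟨h1, h2⟩ | ⟨h1, h2⟩ | ⟨h1, h2⟩), (⟨h3, h4⟩ | ⟨h3, h4⟩ | ⟨h3, h4⟩)⟩ <;>
      simp_all
  · rintro ⟨h1, h2⟩
    exact ⟨Or.inl ⟨h1, h2⟩, Or.inl ⟨h1.trans hpt, h2.trans hln⟩⟩

lemma isPencil_relatedSet {Φ Ψ : ProjFlag K V} (hne : Φ ≠ Ψ) (h : Φ.Related Ψ) :
    IsPencil {X : ProjFlag K V | X.Related Φ ∧ X.Related Ψ} := by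
  rcases h with ⟨h1, h2⟩ | ⟨h1, h2⟩ | ⟨h1, h2⟩
  · exact Or.inr (Or.inr ⟨Φ.pt, Φ.ln, Φ.finrank_pt, Φ.finrank_ln, Φ.pt_le_ln,
      relatedSet_eq_flagsOfPointLine hne h1 h2⟩)
  · exact Or.inr (Or.inl ⟨Φ.pt, Φ.pl, Φ.finrank_pt, Φ.finrank_pl, Φ.pt_le_ln.trans Φ.ln_le_pl,
      relatedSet_eq_flagsOfPointPlane hne h1 h2⟩)
  · exact Or.inl ⟨Φ.ln, Φ.pl, Φ.finrank_ln, Φ.finrank_pl, Φ.ln_le_pl,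
      relatedSet_eq_flagsOfLinePlane hne h1 h2⟩


/-- A Plücker transformation maps every pencil of flags onto a pencil of flags. -/
theorem plucker_image_of_pencil_isPencil
    (hV : Module.finrank K V = 4)
    (α : ProjFlag K V → ProjFlag K V) (hbij : Function.Bijective α)
    (hα : ∀ Φ Ψ : ProjFlag K V, Φ.Related Ψ ↔ (α Φ).Related (α Ψ))
    (M : Set (ProjFlag K V)) (hM : IsPencil M) :
    IsPencil (α '' M) := by
  have : FiniteDimensional K V := Module.finite_of_finrank_pos (by omega)
  obtain ⟨Φ, Ψ, hne, hrel, hMeq⟩ :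
      ∃ Φ Ψ : ProjFlag K V, Φ ≠ Ψ ∧ Φ.Related Ψ ∧
        M = {X : ProjFlag K V | X.Related Φ ∧ X.Related Ψ} := by
    rcases hM with ⟨g, ε, hg, hε, hge, rfl⟩ | ⟨P, ε, hP, hε, hPε, rfl⟩ | ⟨P, g, hP, hg, hPg, rfl⟩
    · obtain ⟨P₁, P₂, hne, _, h1g, _, h2g, hr1, hr2⟩ :=
        exists_pair_intermediate (bot_le : (⊥ : Submodule K V) ≤ g)
          (by rw [finrank_bot]; omega)
      rw [finrank_bot] at hr1 hr2
      set Φ : ProjFlag K V := ⟨P₁, g, ε, hr1, hg, hε, h1g, hge⟩ with hΦ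
      set Ψ : ProjFlag K V := ⟨P₂, g, ε, hr2, hg, hε, h2g, hge⟩ with hΨ
      have hne' : Φ ≠ Ψ := fun h => hne (congrArg ProjFlag.pt h)
      exact ⟨Φ, Ψ, hne', Or.inr (Or.inr ⟨rfl, rfl⟩),
        (relatedSet_eq_flagsOfLinePlane hne' rfl rfl).symm⟩
    · obtain ⟨g₁, g₂, hne, hP1, h1ε, hP2, h2ε, hr1, hr2⟩ :=
        exists_pair_intermediate hPε (by omega)
      rw [hP] at hr1 hr2
      set Φ : ProjFlag K V := ⟨P, g₁, ε, hP, hr1, hε, hP1, h1ε⟩ with hΦ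
      set Ψ : ProjFlag K V := ⟨P, g₂, ε, hP, hr2, hε, hP2, h2ε⟩ with hΨ
      have hne' : Φ ≠ Ψ := fun h => hne (congrArg ProjFlag.ln h)
      exact ⟨Φ, Ψ, hne', Or.inr (Or.inl ⟨rfl, rfl⟩),
        (relatedSet_eq_flagsOfPointPlane hne' rfl rfl).symm⟩
    · obtain ⟨ε₁, ε₂, hne, hg1, _, hg2, _, hr1, hr2⟩ :=
        exists_pair_intermediate (le_top : g ≤ (⊤ : Submodule K V))
          (by rw [finrank_top]; omega)
      rw [hg] at hr1 hr2
      set Φ : ProjFlag K V := ⟨P, g, ε₁, hP, hg, hr1, hPg, hg1⟩ with hΦ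
      set Ψ : ProjFlag K V := ⟨P, g, ε₂, hP, hg, hr2, hPg, hg2⟩ with hΨ
      have hne' : Φ ≠ Ψ := fun h => hne (congrArg ProjFlag.pl h)
      exact ⟨Φ, Ψ, hne', Or.inl ⟨rfl, rfl⟩,
        (relatedSet_eq_flagsOfPointLine hne' rfl rfl).symm⟩
  have himg : α '' M = {X : ProjFlag K V | X.Related (α Φ) ∧ X.Related (α Ψ)} := by
    ext X
    constructor
    · rintro ⟨Y, hY, rfl⟩
      rw [hMeq] at hY
      exact ⟨(hα Y Φ).mp hY.1, (hα Y Ψ).mp hY.2⟩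
    · rintro ⟨h1, h2⟩
      obtain ⟨Y, rfl⟩ := hbij.2 X
      exact ⟨Y, by rw [hMeq]; exact ⟨(hα Y Φ).mpr h1, (hα Y Ψ).mpr h2⟩, rfl⟩
  rw [himg]
  exact isPencil_relatedSet (fun h => hne (hbij.1 h)) ((hα Φ Ψ).mp hrel)
end
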